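/- arXiv:2407.19181 — 3 statements merged into one kernel-verified Lean document; each statement's English description precedes it below -/
import Mathlib

section
/- Conversely to the shift symmetry: if two tuples (ℓ12, ℓ23, ℓ31, ℓ21, ℓ32, ℓ13, t) and (ℓ12', ℓ23', ℓ31', ℓ21', ℓ32', ℓ13', t') of naturals (t, t' ∈ ℤ) have the same image under Φ (defined by p1 = ℓ12 + ℓ13 + max(t,0), q1 = ℓ31 + ℓ21 + max(-t,0), p2 = ℓ23 + ℓ21 + max(t,0), q2 = ℓ12 + ℓ32 + max(-t,0), p3 = ℓ31 + ℓ32 + max(t,0), q3 = ℓ23 + ℓ13 + max(-t,0)), then t = t' and there exists an integer n such that ℓ12' = ℓ12 - n, ℓ23' = ℓ23 - n, ℓ31' = ℓ31 - n, ℓ21' = ℓ21 + n, ℓ32' = ℓ32 + n, ℓ13' = ℓ13 + n. -/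
/-- The map from naive LSH quantum numbers `(ℓ12, ℓ23, ℓ31, ℓ21, ℓ32, ℓ13, t)` at an SU(3)
trivalent vertex to the sector labels `(p1, q1, p2, q2, p3, q3)`. -/
def lshSector (l12 l23 l31 l21 l32 l13 : ℕ) (t : ℤ) : ℤ × ℤ × ℤ × ℤ × ℤ × ℤ :=
  ((l12 : ℤ) + l13 + max t 0, (l31 : ℤ) + l21 + max (-t) 0,
   (l23 : ℤ) + l21 + max t 0, (l12 : ℤ) + l32 + max (-t) 0,
   (l31 : ℤ) + l32 + max t 0, (l23 : ℤ) + l13 + max (-t) 0)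

/-- Converse of the shift symmetry: any two naive LSH tuples with the same sector labels
have the same `t` and are related by the shift transformation by some integer `n`. -/
theorem lsh_same_sector_related_by_shift
    (l12 l23 l31 l21 l32 l13 : ℕ) (t : ℤ)
    (l12' l23' l31' l21' l32' l13' : ℕ) (t' : ℤ)
    (h : lshSector l12 l23 l31 l21 l32 l13 t =
         lshSector l12' l23' l31' l21' l32' l13' t') :
    t = t' ∧ ∃ n : ℤ,
      (l12' : ℤ) = (l12 : ℤ) - n ∧ (l23' : ℤ) = (l23 : ℤ) - n ∧
      (l31' : ℤ) = (l31 : ℤ) - n ∧ (l21' : ℤ) = (l21 : ℤ) + n ∧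
      (l32' : ℤ) = (l32 : ℤ) + n ∧ (l13' : ℤ) = (l13 : ℤ) + n := by
  simp only [lshSector, Prod.mk.injEq] at h
  obtain ⟨h1, h2, h3, h4, h5, h6⟩ := h
  refine ⟨by omega, (l12 : ℤ) - l12', by omega, by omega, by omega, by omega, by omega, by omega⟩
end

section
/- Fix nonnegative integers p1', q1', p2', q2', p3' satisfying the consistency conditions needed for solvability. The number of tuples (ℓ12, ℓ23, ℓ31, ℓ21, ℓ32, ℓ13) of nonnegative integers satisfying p1' = ℓ12 + ℓ13, q1' = ℓ31 + ℓ21, p2' = ℓ23 + ℓ21, q2' = ℓ12 + ℓ32, p3' = ℓ31 + ℓ32 (and consequently q3' := ℓ23 + ℓ13 = p1' + p2' + p3' - q1' - q2') equals max(0, 1 + min(q1', p3', p1' + p3' - q2') - max(p3' - q2', q1' - p2', 0)). -/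
/-- LSH counting formula for the dimension of a fixed `(p,q)` sector at an SU(3) trivalent
vertex: the number of tuples `(ℓ12, ℓ23, ℓ31, ℓ21, ℓ32, ℓ13) ∈ ℕ^6` solving the five
linear equations equals `max(0, 1 + min(q1', p3', p1'+p3'-q2') - max(p3'-q2', q1'-p2', 0))`. -/
theorem lsh_sector_dimension_count (p1' q1' p2' q2' p3' : ℕ) :
    Set.ncard {l : ℕ × ℕ × ℕ × ℕ × ℕ × ℕ |
        p1' = l.1 + l.2.2.2.2.2 ∧
        q1' = l.2.2.1 + l.2.2.2.1 ∧
        p2' = l.2.1 + l.2.2.2.1 ∧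
        q2' = l.1 + l.2.2.2.2.1 ∧
        p3' = l.2.2.1 + l.2.2.2.2.1} =
      (max 0 (1 + min (min (q1' : ℤ) (p3' : ℤ)) ((p1' : ℤ) + p3' - q2')
        - max (max ((p3' : ℤ) - q2') ((q1' : ℤ) - p2')) 0)).toNat := by
  set L : ℤ := max (max ((p3' : ℤ) - q2') ((q1' : ℤ) - p2')) 0 with hL
  set U : ℤ := min (min (q1' : ℤ) (p3' : ℤ)) ((p1' : ℤ) + p3' - q2') with hU
  set g : ℤ → ℕ × ℕ × ℕ × ℕ × ℕ × ℕ := fun t =>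
    (((q2' : ℤ) - p3' + t).toNat, ((p2' : ℤ) - q1' + t).toNat, t.toNat,
      ((q1' : ℤ) - t).toNat, ((p3' : ℤ) - t).toNat, ((p1' : ℤ) + p3' - q2' - t).toNat)
    with hg
  have hset : {l : ℕ × ℕ × ℕ × ℕ × ℕ × ℕ |
        p1' = l.1 + l.2.2.2.2.2 ∧
        q1' = l.2.2.1 + l.2.2.2.1 ∧
        p2' = l.2.1 + l.2.2.2.1 ∧
        q2' = l.1 + l.2.2.2.2.1 ∧
        p3' = l.2.2.1 + l.2.2.2.2.1} = g '' (Set.Icc L U) := by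
    ext ⟨a, b, c, d, e, f⟩
    simp only [Set.mem_setOf_eq, Set.mem_image, Set.mem_Icc, hg, hL, hU, Prod.mk.injEq]
    constructor
    · rintro ⟨h1, h2, h3, h4, h5⟩
      exact ⟨(c : ℤ), by omega, by omega, by omega, by omega, by omega, by omega, by omega⟩
    · rintro ⟨t, ⟨ht1, ht2⟩, rfl, rfl, rfl, rfl, rfl, rfl⟩
      refine ⟨by omega, by omega, by omega, by omega, by omega⟩
  rw [hset]
  have hinj : Set.InjOn g (Set.Icc L U) := by
    intro x hx y hy hxy
    simp only [Set.mem_Icc, hL] at hx hy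
    have := congrArg (fun l => l.2.2.1) hxy
    simp only [hg] at this
    omega
  rw [Set.ncard_image_of_injOn hinj, ← Finset.coe_Icc, Set.ncard_coe_finset, Int.card_Icc]
  omega
end

section
/- For the map Φ from LSH tuples to sector labels (p1 = ℓ12 + ℓ13 + max(t,0), q1 = ℓ31 + ℓ21 + max(-t,0), p2 = ℓ23 + ℓ21 + max(t,0), q2 = ℓ12 + ℓ32 + max(-t,0), p3 = ℓ31 + ℓ32 + max(t,0), q3 = ℓ23 + ℓ13 + max(-t,0)), every tuple in the image satisfies p1 + p2 + p3 ≡ q1 + q2 + q3 (mod 3), and conversely for a tuple (p1,...,q3) in the image the preimage is a singleton if and only if every preimage tuple (ℓ12, ℓ23, ℓ31, ℓ21, ℓ32, ℓ13, t) satisfies min(ℓ12, ℓ23, ℓ31) = 0 and min(ℓ21, ℓ32, ℓ13) = 0. -/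
/-- The map from naive LSH tuples `(ℓ12, ℓ23, ℓ31, ℓ21, ℓ32, ℓ13, t)` at an SU(3)
trivalent vertex to the sector labels `(p1, q1, p2, q2, p3, q3)`. -/
def lshSectorMap (x : ℕ × ℕ × ℕ × ℕ × ℕ × ℕ × ℤ) : ℤ × ℤ × ℤ × ℤ × ℤ × ℤ :=
  ((x.1 : ℤ) + x.2.2.2.2.2.1 + max x.2.2.2.2.2.2 0,
   (x.2.2.1 : ℤ) + x.2.2.2.1 + max (-x.2.2.2.2.2.2) 0,
   (x.2.1 : ℤ) + x.2.2.2.1 + max x.2.2.2.2.2.2 0,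
   (x.1 : ℤ) + x.2.2.2.2.1 + max (-x.2.2.2.2.2.2) 0,
   (x.2.2.1 : ℤ) + x.2.2.2.2.1 + max x.2.2.2.2.2.2 0,
   (x.2.1 : ℤ) + x.2.2.2.2.2.1 + max (-x.2.2.2.2.2.2) 0)

private lemma lsh_key {x y : ℕ × ℕ × ℕ × ℕ × ℕ × ℕ × ℤ}
    (h : lshSectorMap x = lshSectorMap y) :
    ∃ k : ℤ, (y.1:ℤ) = x.1 + k ∧ (y.2.1:ℤ) = x.2.1 + k ∧ (y.2.2.1:ℤ) = x.2.2.1 + k ∧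
      (y.2.2.2.1:ℤ) = x.2.2.2.1 - k ∧ (y.2.2.2.2.1:ℤ) = x.2.2.2.2.1 - k ∧
      (y.2.2.2.2.2.1:ℤ) = x.2.2.2.2.2.1 - k ∧ y.2.2.2.2.2.2 = x.2.2.2.2.2.2 := by
  obtain ⟨a,b,c,d,e,f,t⟩ := x
  obtain ⟨a',b',c',d',e',f',t'⟩ := y
  simp only [lshSectorMap, Prod.mk.injEq] at h
  dsimp only
  exact ⟨(a':ℤ) - a, by omega, by omega, by omega, by omega, by omega, by omega, by omega⟩

/-- Characterization of the nondegenerate sectors of the SU(3) trivalent vertex: every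
sector label in the image satisfies `p1+p2+p3 ≡ q1+q2+q3 (mod 3)`, and a sector label in
the image has a unique naive LSH preimage if and only if every preimage tuple has
`min(ℓ12, ℓ23, ℓ31) = 0` and `min(ℓ21, ℓ32, ℓ13) = 0`. -/
theorem lsh_nondegenerate_sector_characterization :
    (∀ x : ℕ × ℕ × ℕ × ℕ × ℕ × ℕ × ℤ,
      Int.ModEq 3
        ((lshSectorMap x).1 + (lshSectorMap x).2.2.1 + (lshSectorMap x).2.2.2.2.1)
        ((lshSectorMap x).2.1 + (lshSectorMap x).2.2.2.1 + (lshSectorMap x).2.2.2.2.2)) ∧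
    (∀ s ∈ Set.range lshSectorMap,
      (∃! x, lshSectorMap x = s) ↔
        ∀ x : ℕ × ℕ × ℕ × ℕ × ℕ × ℕ × ℤ, lshSectorMap x = s →
          min (min x.1 x.2.1) x.2.2.1 = 0 ∧
          min (min x.2.2.2.1 x.2.2.2.2.1) x.2.2.2.2.2.1 = 0) := by
  constructor
  · intro ⟨a,b,c,d,e,f,t⟩
    simp only [lshSectorMap, Int.ModEq]
    omega
  · rintro s ⟨x₀, rfl⟩
    constructor
    · rintro ⟨u, hu, huniq⟩ x hx
      obtain ⟨a,b,c,d,e,f,t⟩ := x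
      dsimp only
      constructor
      · by_contra hmin
        have h1 : 1 ≤ a ∧ 1 ≤ b ∧ 1 ≤ c := by omega
        have hx' : lshSectorMap (a-1,b-1,c-1,d+1,e+1,f+1,t) = lshSectorMap x₀ := by
          rw [← hx]; simp only [lshSectorMap, Prod.mk.injEq]
          push_cast
          refine ⟨by omega, by omega, by omega, by omega, by omega, by omega⟩
        have e1 := (huniq _ hx').trans (huniq _ hx).symm
        simp only [Prod.mk.injEq] at e1
        omega
      · by_contra hmin
        have h1 : 1 ≤ d ∧ 1 ≤ e ∧ 1 ≤ f := by omega
        have hx' : lshSectorMap (a+1,b+1,c+1,d-1,e-1,f-1,t) = lshSectorMap x₀ := by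
          rw [← hx]; simp only [lshSectorMap, Prod.mk.injEq]
          push_cast
          refine ⟨by omega, by omega, by omega, by omega, by omega, by omega⟩
        have e1 := (huniq _ hx').trans (huniq _ hx).symm
        simp only [Prod.mk.injEq] at e1
        omega
    · intro hall
      refine ⟨x₀, rfl, ?_⟩
      intro y hy
      obtain ⟨k, h1, h2, h3, h4, h5, h6, h7⟩ := lsh_key (x := x₀) (y := y) hy.symm
      obtain ⟨m1, m2⟩ := hall y hy
      obtain ⟨m1', m2'⟩ := hall x₀ rfl
      obtain ⟨a,b,c,d,e,f,t⟩ := x₀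
      obtain ⟨a',b',c',d',e',f',t'⟩ := y
      dsimp only at h1 h2 h3 h4 h5 h6 h7 m1 m2 m1' m2'
      simp only [Prod.mk.injEq]
      omega
end
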